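/- Let r ≥ 1 be an integer and let (α;β) = (α₁,…,α_{r+1};β₁,…,β_r) ∈ 𝒰_r be such that no β_i + 1 is a non-positive integer. Then for every integer n ≥ 0, Σ_{j=0}^{n} (α₁)_j⋯(α_{r+1})_j/((β₁+1)_j⋯(β_r+1)_j · j!) = (α₁+1)_n⋯(α_{r+1}+1)_n/((β₁+1)_n⋯(β_r+1)_n · n!). -/
import Mathlib

noncomputable def poch (a : ℂ) (k : ℕ) : ℂ := Polynomial.eval a (ascPochhammer ℂ k)

noncomputable def esym {n : ℕ} (v : Fin n → ℂ) (l : ℕ) : ℂ :=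
  ∑ t ∈ Finset.powersetCard l (Finset.univ : Finset (Fin n)), ∏ i ∈ t, v i

def inU (r : ℕ) (α : Fin (r+1) → ℂ) (β : Fin r → ℂ) : Prop :=
  ∀ l : ℕ, 1 ≤ l → l ≤ r → esym α l = esym β l

lemma poch_zero (a : ℂ) : poch a 0 = 1 := by simp [poch]

lemma poch_succ_right (a : ℂ) (n : ℕ) : poch a (n+1) = poch a n * (a + n) := by
  simp [poch, ascPochhammer_succ_right]

lemma poch_succ_left (a : ℂ) (n : ℕ) : poch a (n+1) = a * poch (a+1) n := by
  simp [poch, ascPochhammer_succ_left, Polynomial.eval_comp]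

lemma poch_ne_zero (a : ℂ) (h : ∀ m : ℕ, a ≠ -(m : ℂ)) (n : ℕ) : poch a n ≠ 0 := by
  induction n with
  | zero => simp [poch_zero]
  | succ k ih =>
    rw [poch_succ_right]
    refine mul_ne_zero ih ?_
    intro hc
    exact h k (by linear_combination hc)

lemma prod_add_esym {n : ℕ} (v : Fin n → ℂ) (x : ℂ) :
    ∏ i, (v i + x) = ∑ k ∈ Finset.range (n+1), esym v k * x^(n-k) := by
  classical
  rw [Finset.prod_add, Finset.powerset_card_biUnion, Finset.sum_biUnion]
  · simp only [Finset.card_univ, Fintype.card_fin, esym, Finset.sum_mul]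
    refine Finset.sum_congr rfl fun k _ => Finset.sum_congr rfl fun t ht => ?_
    rw [Finset.mem_powersetCard] at ht
    rw [Finset.prod_const, Finset.card_sdiff_of_subset (Finset.subset_univ t),
      Finset.card_univ, Fintype.card_fin, ht.2]
  · intro i hi j hj hij
    refine Finset.disjoint_left.mpr fun t hti htj => hij ?_
    simp only [Finset.mem_powersetCard] at hti htj
    rw [← hti.2, htj.2]

lemma esym_zero {n : ℕ} (v : Fin n → ℂ) : esym v 0 = 1 := by
  simp [esym]

lemma esym_top {n : ℕ} (v : Fin n → ℂ) : esym v n = ∏ i, v i := by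
  have h : Finset.powersetCard n (Finset.univ : Finset (Fin n)) = {Finset.univ} := by
    have h2 := Finset.powersetCard_self (Finset.univ : Finset (Fin n))
    rwa [Finset.card_univ, Fintype.card_fin] at h2
  rw [esym, h, Finset.sum_singleton]

lemma key_identity (r : ℕ) (α : Fin (r+1) → ℂ) (β : Fin r → ℂ) (hU : inU r α β) (x : ℂ) :
    ∏ i, (α i + x) = x * ∏ i, (β i + x) + ∏ i, α i := by
  rw [prod_add_esym, prod_add_esym, Finset.mul_sum, Finset.sum_range_succ, esym_top,
    Nat.sub_self, pow_zero, mul_one]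
  congr 1
  refine Finset.sum_congr rfl fun k hk => ?_
  rw [Finset.mem_range] at hk
  have hkr : k ≤ r := Nat.lt_succ_iff.mp hk
  have hrk : r + 1 - k = (r - k) + 1 := by omega
  have hpow : x * (esym β k * x ^ (r - k)) = esym β k * x ^ (r + 1 - k) := by
    rw [hrk, pow_succ']; ring
  rw [hpow]
  rcases Nat.eq_zero_or_pos k with h0 | h1
  · subst h0; rw [esym_zero, esym_zero]
  · rw [hU k h1 hkr]

/-- Partial sums of the r-balanced series (eq:newnew). -/
theorem partial_sum_formula
    (r : ℕ) (hr : 1 ≤ r) (α : Fin (r+1) → ℂ) (β : Fin r → ℂ)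
    (hU : inU r α β)
    (hβ : ∀ i : Fin r, ∀ m : ℕ, β i + 1 ≠ -(m : ℂ))
    (n : ℕ) :
    ∑ j ∈ Finset.range (n+1),
        (∏ i, poch (α i) j) / ((∏ i, poch (β i + 1) j) * (j.factorial : ℂ))
      = (∏ i, poch (α i + 1) n) / ((∏ i, poch (β i + 1) n) * (n.factorial : ℂ)) := by
  induction n with
  | zero => simp [poch_zero]
  | succ n ih =>
    rw [Finset.sum_range_succ, ih]
    have hBn : (∏ i, poch (β i + 1) n) ≠ 0 :=
      Finset.prod_ne_zero_iff.mpr fun i _ => poch_ne_zero _ (hβ i) n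
    have hPβ : (∏ i : Fin r, (β i + 1 + (n:ℂ))) ≠ 0 := by
      refine Finset.prod_ne_zero_iff.mpr fun i _ => ?_
      intro hc
      exact hβ i n (by linear_combination hc)
    have hfac : ((n.factorial : ℂ)) ≠ 0 := Nat.cast_ne_zero.mpr n.factorial_ne_zero
    have hn1 : ((n : ℂ) + 1) ≠ 0 := Nat.cast_add_one_ne_zero n
    have hA' : (∏ i, poch (α i + 1) (n+1)) =
        (∏ i, poch (α i + 1) n) * ∏ i, (α i + 1 + n) := by
      rw [← Finset.prod_mul_distrib]
      exact Finset.prod_congr rfl fun i _ => poch_succ_right _ _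
    have hB' : (∏ i, poch (β i + 1) (n+1)) =
        (∏ i, poch (β i + 1) n) * ∏ i, (β i + 1 + n) := by
      rw [← Finset.prod_mul_distrib]
      exact Finset.prod_congr rfl fun i _ => poch_succ_right _ _
    have hAl : (∏ i, poch (α i) (n+1)) = (∏ i, α i) * ∏ i, poch (α i + 1) n := by
      rw [← Finset.prod_mul_distrib]
      exact Finset.prod_congr rfl fun i _ => poch_succ_left _ _
    have key := key_identity r α β hU ((n : ℂ) + 1)
    have e1 : (∏ i, (α i + 1 + (n:ℂ))) = ∏ i, (α i + ((n:ℂ)+1)) :=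
      Finset.prod_congr rfl fun i _ => by ring
    have e2 : (∏ i, (β i + 1 + (n:ℂ))) = ∏ i, (β i + ((n:ℂ)+1)) :=
      Finset.prod_congr rfl fun i _ => by ring
    have hkey : (∏ i, (α i + 1 + (n:ℂ))) = ((n:ℂ)+1) * (∏ i, (β i + 1 + n)) + ∏ i, α i := by
      rw [e1, e2]; exact key
    rw [hA', hB', hAl, hkey, Nat.factorial_succ]
    push_cast
    field_simp
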